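/- Under the setup of the divergence identity — d ∈ ℕ, y ∈ ℝ^d, r > 0, P : ℝ^d → ℝ^{d×d} continuously differentiable and diagonal, E : ℝ^d → ℝ and μ : ℝ^d → ℝ continuously differentiable with ∇μ(x) = −P(x)∇E(x) μ(x), ξ(x) = (x − y)/r, V(x) = μ(x)P(x)ξ(x) — suppose that at a point x ∈ ℝ^d: μ(x) > 0; P_{ii}(x) > 0 for every i; (∂_{x_i} P_{ii}(x))(x_i − y_i) ≥ 0 for every i; and (∂_{x_i} E(x))(x_i − y_i) ≤ 0 for every i. Then div V(x) > 0. -/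

import Mathlib

/-!
With `P` diagonal, `V_i = μ P_ii (x_i - y_i) / r`, and the product rule together with
`∂_i μ = -P_ii ∂_i E μ` gives
`∂_i V_i = μ / r * (P_ii + ∂_i P_ii (x_i - y_i) - P_ii² ∂_i E (x_i - y_i))`.
The first summand is positive and the sign hypotheses make the other two nonnegative.
-/

/-- Partial derivative of `f : ℝ^d → ℝ` in the `i`-th coordinate direction. -/
noncomputable def pd {d : ℕ} (i : Fin d)
    (f : EuclideanSpace ℝ (Fin d) → ℝ) (x : EuclideanSpace ℝ (Fin d)) : ℝ :=
  fderiv ℝ f x (EuclideanSpace.single i (1 : ℝ))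

theorem Matrix.sum_mul_eq_diag_mul {ι R : Type*} [Fintype ι] [NonUnitalNonAssocSemiring R]
    (M : Matrix ι ι R) (v : ι → R) (i : ι) (hM : ∀ j, i ≠ j → M i j = 0) :
    ∑ j, M i j * v j = M i i * v i :=
  Finset.sum_eq_single_of_mem i (Finset.mem_univ i) fun j _ hj => by
    rw [hM j (Ne.symm hj), zero_mul]

section PartialDerivative

variable {d : ℕ} {i : Fin d} {x : EuclideanSpace ℝ (Fin d)}

theorem pd_mul {f g : EuclideanSpace ℝ (Fin d) → ℝ}
    (hf : DifferentiableAt ℝ f x) (hg : DifferentiableAt ℝ g x) :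
    pd i (fun z => f z * g z) x = pd i f x * g x + f x * pd i g x := by
  rw [pd, pd, pd, fderiv_fun_mul hf hg]
  simp only [add_apply, smul_apply, smul_eq_mul]
  ring

theorem pd_coord_sub_div (c r : ℝ) :
    pd i (fun z : EuclideanSpace ℝ (Fin d) => (z i - c) / r) x = 1 / r := by
  have hderiv : HasFDerivAt (fun z : EuclideanSpace ℝ (Fin d) => (z i - c) / r)
      (r⁻¹ • EuclideanSpace.proj (𝕜 := ℝ) i) x := by
    simpa [div_eq_mul_inv] using
      ((EuclideanSpace.proj (𝕜 := ℝ) i).hasFDerivAt.sub_const c).mul_const r⁻¹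
  simp [pd, hderiv.fderiv]

theorem pd_diagonal_flux_component
    (y : EuclideanSpace ℝ (Fin d)) (r : ℝ)
    (P : EuclideanSpace ℝ (Fin d) → Matrix (Fin d) (Fin d) ℝ)
    (En μ : EuclideanSpace ℝ (Fin d) → ℝ)
    (hdiag : ∀ z, ∀ j, i ≠ j → P z i j = 0)
    (hμ : DifferentiableAt ℝ μ x) (hPii : DifferentiableAt ℝ (fun z => P z i i) x)
    (hgrad : pd i μ x = -(∑ j, P x i j * pd j En x) * μ x) :
    pd i (fun z => μ z * ∑ j, P z i j * ((z j - y j) / r)) x =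
      μ x / r * (P x i i + pd i (fun z => P z i i) x * (x i - y i)
        - P x i i ^ 2 * (pd i En x * (x i - y i))) := by
  have hV : (fun z => μ z * ∑ j, P z i j * ((z j - y j) / r)) =
      fun z => μ z * (P z i i * ((z i - y i) / r)) := by
    funext z
    rw [Matrix.sum_mul_eq_diag_mul (P z) (fun j => (z j - y j) / r) i (hdiag z)]
  have hξ : DifferentiableAt ℝ (fun z : EuclideanSpace ℝ (Fin d) => (z i - y i) / r) x := by
    fun_prop
  rw [hV, pd_mul hμ (hPii.fun_mul hξ), pd_mul hPii hξ, pd_coord_sub_div, hgrad,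
    Matrix.sum_mul_eq_diag_mul (P x) (fun j => pd j En x) i (hdiag x)]
  ring

end PartialDerivative

theorem flux_divergence_positive_general
    (d : ℕ) (hd : 0 < d)
    (y : EuclideanSpace ℝ (Fin d)) (r : ℝ) (hr : 0 < r)
    (P : EuclideanSpace ℝ (Fin d) → Matrix (Fin d) (Fin d) ℝ)
    (En μ : EuclideanSpace ℝ (Fin d) → ℝ)
    (hP : ∀ i j, ContDiff ℝ 1 fun x => P x i j)
    (hdiag : ∀ x, ∀ i j, i ≠ j → P x i j = 0)
    (hμ : ContDiff ℝ 1 μ)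
    -- condition (III): ∇μ(x) = −P(x)∇E(x) μ(x), componentwise
    (hgrad : ∀ x i, pd i μ x = -(∑ j, P x i j * pd j En x) * μ x)
    (x : EuclideanSpace ℝ (Fin d))
    (hμx : 0 < μ x)
    (hPx : ∀ i, 0 < P x i i)
    (hPsign : ∀ i, 0 ≤ pd i (fun z => P z i i) x * (x i - y i))
    (hEsign : ∀ i, pd i En x * (x i - y i) ≤ 0) :
    -- div V(x) > 0 for V(x) = μ(x) P(x) ξ(x), ξ(x) = (x − y)/r
    0 < ∑ i, pd i (fun z => μ z * ∑ j, P z i j * ((z j - y j) / r)) x := by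
  refine Finset.sum_pos (fun i _ => ?_) ⟨⟨0, hd⟩, Finset.mem_univ _⟩
  rw [pd_diagonal_flux_component y r P En μ (hdiag · i) (hμ.differentiable one_ne_zero x)
    ((hP i i).differentiable one_ne_zero x) (hgrad x i)]
  have hE_term : P x i i ^ 2 * (pd i En x * (x i - y i)) ≤ 0 :=
    mul_nonpos_of_nonneg_of_nonpos (sq_nonneg _) (hEsign i)
  have hbracket : 0 < P x i i + pd i (fun z => P z i i) x * (x i - y i)
      - P x i i ^ 2 * (pd i En x * (x i - y i)) := by
    linarith [hPx i, hPsign i]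
  exact mul_pos (div_pos hμx hr) hbracket

theorem flux_divergence_positive
    (d : ℕ) (hd : 0 < d)
    (y : EuclideanSpace ℝ (Fin d)) (r : ℝ) (hr : 0 < r)
    (P : EuclideanSpace ℝ (Fin d) → Matrix (Fin d) (Fin d) ℝ)
    (En μ : EuclideanSpace ℝ (Fin d) → ℝ)
    (hP : ∀ i j, ContDiff ℝ 1 fun x => P x i j)
    (hdiag : ∀ x, ∀ i j, i ≠ j → P x i j = 0)
    (hE : ContDiff ℝ 1 En) (hμ : ContDiff ℝ 1 μ)
    -- condition (III): ∇μ(x) = −P(x)∇E(x) μ(x), componentwise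
    (hgrad : ∀ x i, pd i μ x = -(∑ j, P x i j * pd j En x) * μ x)
    (x : EuclideanSpace ℝ (Fin d))
    (hμx : 0 < μ x)
    (hPx : ∀ i, 0 < P x i i)
    (hPsign : ∀ i, 0 ≤ pd i (fun z => P z i i) x * (x i - y i))
    (hEsign : ∀ i, pd i En x * (x i - y i) ≤ 0) :
    -- div V(x) > 0 for V(x) = μ(x) P(x) ξ(x), ξ(x) = (x − y)/r
    0 < ∑ i, pd i (fun z => μ z * ∑ j, P z i j * ((z j - y j) / r)) x :=
  flux_divergence_positive_general d hd y r hr P En μ hP hdiag hμ hgrad x hμx hPx hPsign hEsign
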